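/- If G and H are finite abelian groups of coprime orders, then mq(G × H) = mq(G) · mq(H). Consequently, the function n ↦ mq(n) is multiplicative: if n = p_1^{k_1} · ... · p_m^{k_m} is the prime factorization of n, then mq(n) = mq(p_1^{k_1}) · ... · mq(p_m^{k_m}). -/

import Mathlib

/-- A binary operation is a quasigroup operation if all left and right
translations are bijective. -/
def IsQuasigroup {Q : Type*} (op : Q → Q → Q) : Prop :=
  (∀ a : Q, Function.Bijective fun x => op a x) ∧
  (∀ a : Q, Function.Bijective fun x => op x a)

/-- The medial law. -/
def IsMedial {Q : Type*} (op : Q → Q → Q) : Prop :=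
  ∀ x y u v : Q, op (op x y) (op u v) = op (op x u) (op y v)

/-- A quasigroup `(Q, op)` admits an affine form over an abelian group `G` if,
after identifying `Q` with `G` via a bijection, the operation is
`x * y = φ(x) + ψ(y) + c` for automorphisms `φ, ψ` of `G` and `c ∈ G`. -/
def AdmitsAffineForm {Q : Type*} (op : Q → Q → Q) (G : Type*) [AddCommGroup G] : Prop :=
  ∃ (e : Q ≃ G) (φ ψ : G ≃+ G) (c : G),
    ∀ x y : Q, e (op x y) = φ (e x) + ψ (e y) + c

/-- Isomorphism of binary structures (quasigroups). -/
def QuasigroupIso {Q₁ Q₂ : Type*} (op₁ : Q₁ → Q₁ → Q₁) (op₂ : Q₂ → Q₂ → Q₂) : Prop :=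
  ∃ f : Q₁ ≃ Q₂, ∀ x y : Q₁, f (op₁ x y) = op₂ (f x) (f y)

/-- `mqG G` : the number of medial quasigroups admitting an affine form over the
abelian group `G`, up to isomorphism. -/
noncomputable def mqG (G : Type*) [AddCommGroup G] : ℕ :=
  Nat.card (Quot fun
    (op₁ op₂ : {op : G → G → G // IsQuasigroup op ∧ IsMedial op ∧ AdmitsAffineForm op G}) =>
    QuasigroupIso op₁.1 op₂.1)

/-- `mqN n` : the number of medial quasigroups of order `n`, up to isomorphism. -/
noncomputable def mqN (n : ℕ) : ℕ :=
  Nat.card (Quot fun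
    (op₁ op₂ : {op : Fin n → Fin n → Fin n // IsQuasigroup op ∧ IsMedial op}) =>
    QuasigroupIso op₁.1 op₂.1)

namespace MQAux

variable {Q Q' Q'' G H : Type*}

/-- The affine operation attached to a pair of automorphisms and a constant. -/
def affOp [AddCommGroup G] (φ ψ : G ≃+ G) (c : G) : G → G → G :=
  fun x y => φ x + ψ y + c

lemma quasigroupIso_refl (op : Q → Q → Q) : QuasigroupIso op op :=
  ⟨Equiv.refl Q, fun _ _ => rfl⟩

lemma QuasigroupIso.symm {op₁ : Q → Q → Q} {op₂ : Q' → Q' → Q'}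
    (h : QuasigroupIso op₁ op₂) : QuasigroupIso op₂ op₁ := by
  obtain ⟨f, hf⟩ := h
  refine ⟨f.symm, fun x y => ?_⟩
  apply f.injective
  simp [hf]

lemma QuasigroupIso.trans {op₁ : Q → Q → Q} {op₂ : Q' → Q' → Q'} {op₃ : Q'' → Q'' → Q''}
    (h : QuasigroupIso op₁ op₂) (h' : QuasigroupIso op₂ op₃) : QuasigroupIso op₁ op₃ := by
  obtain ⟨f, hf⟩ := h
  obtain ⟨g, hg⟩ := h'
  exact ⟨f.trans g, fun x y => by simp [hf, hg]⟩

lemma quasigroupIso_equivalence (Q : Type*) :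
    Equivalence (fun op₁ op₂ : Q → Q → Q => QuasigroupIso op₁ op₂) :=
  ⟨quasigroupIso_refl, QuasigroupIso.symm, QuasigroupIso.trans⟩

lemma IsQuasigroup.of_iso {op₁ : Q → Q → Q} {op₂ : Q' → Q' → Q'}
    (h : QuasigroupIso op₁ op₂) (hq : IsQuasigroup op₁) : IsQuasigroup op₂ := by
  obtain ⟨f, hf⟩ := h
  have key : ∀ a x : Q, op₂ (f a) (f x) = f (op₁ a x) := fun a x => (hf a x).symm
  constructor
  · intro a
    obtain ⟨b, rfl⟩ := f.surjective a
    have : (fun x => op₂ (f b) x) = f ∘ (fun x => op₁ b x) ∘ f.symm := by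
      funext x
      simp [hf]
    rw [this]
    exact f.bijective.comp ((hq.1 b).comp f.symm.bijective)
  · intro a
    obtain ⟨b, rfl⟩ := f.surjective a
    have : (fun x => op₂ x (f b)) = f ∘ (fun x => op₁ x b) ∘ f.symm := by
      funext x
      simp [hf]
    rw [this]
    exact f.bijective.comp ((hq.2 b).comp f.symm.bijective)

lemma IsMedial.of_iso {op₁ : Q → Q → Q} {op₂ : Q' → Q' → Q'}
    (h : QuasigroupIso op₁ op₂) (hm : IsMedial op₁) : IsMedial op₂ := by
  obtain ⟨f, hf⟩ := h
  intro x y u v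
  obtain ⟨x, rfl⟩ := f.surjective x
  obtain ⟨y, rfl⟩ := f.surjective y
  obtain ⟨u, rfl⟩ := f.surjective u
  obtain ⟨v, rfl⟩ := f.surjective v
  rw [← hf, ← hf, ← hf, ← hf, ← hf, hm]
  rw [hf, hf]

lemma isQuasigroup_affOp [AddCommGroup G] (φ ψ : G ≃+ G) (c : G) :
    IsQuasigroup (affOp φ ψ c) := by
  constructor
  · intro a
    have : (fun x => affOp φ ψ c a x) = (fun z => φ a + z + c) ∘ ψ := rfl
    rw [this]
    refine Function.Bijective.comp ?_ ψ.bijective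
    exact (Equiv.trans (Equiv.addLeft (φ a)) (Equiv.addRight c)).bijective
  · intro a
    have : (fun x => affOp φ ψ c x a) = (fun z => z + (ψ a + c)) ∘ φ := by
      funext x
      simp [affOp, add_assoc]
    rw [this]
    exact (Equiv.addRight (ψ a + c)).bijective.comp φ.bijective

lemma isMedial_affOp [AddCommGroup G] {φ ψ : G ≃+ G} (c : G)
    (h : ∀ x, φ (ψ x) = ψ (φ x)) : IsMedial (affOp φ ψ c) := by
  intro x y u v
  simp only [affOp, map_add, h]
  abel

lemma commute_of_isMedial_affOp [AddCommGroup G] {φ ψ : G ≃+ G} {c : G}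
    (hm : IsMedial (affOp φ ψ c)) : ∀ x, φ (ψ x) = ψ (φ x) := by
  intro x
  have h := hm 0 x 0 0
  simp only [affOp, map_add, map_zero] at h
  have h2 : φ (ψ x) + (φ c + ψ c + c) = ψ (φ x) + (φ c + ψ c + c) := by
    abel_nf at h ⊢
    exact h
  exact add_right_cancel h2

/-- Every isomorphism between affine quasigroups is affine:
`f x = σ x + t` for a group isomorphism `σ`. -/
lemma affine_of_iso [AddCommGroup G] [AddCommGroup H] {φ ψ : G ≃+ G} {c : G}
    {φ' ψ' : H ≃+ H} {c' : H} (f : G ≃ H)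
    (hf : ∀ x y, f (affOp φ ψ c x y) = affOp φ' ψ' c' (f x) (f y)) :
    ∃ σ : G ≃+ H, (∀ x, f x = σ x + f 0) ∧ (∀ x, σ (φ x) = φ' (σ x)) ∧
      (∀ x, σ (ψ x) = ψ' (σ x)) ∧ σ c + f 0 = φ' (f 0) + ψ' (f 0) + c' := by
  have key : ∀ u v : G, f (u + v) = φ' (f (φ.symm u)) + (ψ' (f (ψ.symm (v - c))) + c') := by
    intro u v
    have h := hf (φ.symm u) (ψ.symm (v - c))
    simp only [affOp, AddEquiv.apply_symm_apply] at h
    rw [show u + (v - c) + c = u + v by abel] at h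
    rw [h]
    abel
  have hadd : ∀ u v : G, f (u + v) + f 0 = f u + f v := by
    intro u v
    have h1 := key u v
    have h2 := key u 0
    have h3 := key 0 v
    have h4 := key 0 0
    rw [add_zero] at h2
    rw [zero_add] at h3
    rw [add_zero] at h4
    rw [h1, h2, h3, h4]
    abel
  set σe : G ≃ H := f.trans (Equiv.subRight (f 0)) with hσe
  have hσadd : ∀ u v, σe (u + v) = σe u + σe v := by
    intro u v
    simp only [hσe, Equiv.trans_apply, Equiv.subRight_apply]
    have h5 : f (u + v) = f u + f v - f 0 := by
      rw [eq_sub_iff_add_eq]; exact hadd u v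
    rw [h5]; abel
  set σ := AddEquiv.mk' σe hσadd with hσ
  have hft : ∀ x, f x = σ x + f 0 := by
    intro x
    simp [hσ, hσe, AddEquiv.mk', sub_add_cancel]
  have E : ∀ x y : G, σ (φ x) + σ (ψ y) + (σ c + f 0) =
      φ' (σ x) + ψ' (σ y) + (φ' (f 0) + ψ' (f 0) + c') := by
    intro x y
    have h := hf x y
    simp only [affOp] at h
    rw [hft (φ x + ψ y + c), hft x, hft y] at h
    rw [map_add, map_add] at h
    rw [map_add, map_add] at h
    rw [show σ (φ x) + σ (ψ y) + σ c + f 0 = σ (φ x) + σ (ψ y) + (σ c + f 0) by abel] at h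
    rw [h]
    abel
  have E00 := E 0 0
  simp only [map_zero, zero_add] at E00
  refine ⟨σ, hft, ?_, ?_, E00⟩
  · intro x
    have h := E x 0
    simp only [map_zero, add_zero, zero_add] at h
    rw [E00] at h
    exact add_right_cancel h
  · intro y
    have h := E 0 y
    simp only [map_zero, add_zero, zero_add] at h
    rw [E00] at h
    exact add_right_cancel h

end MQAux
namespace MQAux

noncomputable section Toyoda

variable {Q : Type*} (op : Q → Q → Q)

/-- Left translation as an equiv. -/
def Lq (hq : IsQuasigroup op) (a : Q) : Q ≃ Q := Equiv.ofBijective _ (hq.1 a)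

/-- Right translation as an equiv. -/
def Rq (hq : IsQuasigroup op) (a : Q) : Q ≃ Q := Equiv.ofBijective _ (hq.2 a)

variable (hq : IsQuasigroup op) (e : Q)

/-- Inverse of right translation by `e`. -/
def Ainv : Q → Q := fun x => (Rq op hq e).symm x

/-- Inverse of left translation by `e`. -/
def Binv : Q → Q := fun x => (Lq op hq e).symm x

lemma op_Ainv (x : Q) : op (Ainv op hq e x) e = x := (Rq op hq e).apply_symm_apply x

lemma op_Binv (x : Q) : op e (Binv op hq e x) = x := (Lq op hq e).apply_symm_apply x

lemma Ainv_op (x : Q) : Ainv op hq e (op x e) = x := (Rq op hq e).symm_apply_apply x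

lemma Binv_op (x : Q) : Binv op hq e (op e x) = x := (Lq op hq e).symm_apply_apply x

/-- The candidate addition. -/
def tAdd : Q → Q → Q := fun x y => op (Ainv op hq e x) (Binv op hq e y)

/-- The candidate zero. -/
def tZero : Q := op e e

/-- The candidate negation. -/
def tNeg : Q → Q :=
  fun x => op ((Rq op hq (Binv op hq e x)).symm (tZero op e)) e

lemma L_e_split (hm : IsMedial op) (p q : Q) :
    op e (op p q) = op (op (Ainv op hq e e) p) (op e q) := by
  have h1 : op e (op p q) = op (op (Ainv op hq e e) e) (op p q) := by
    rw [op_Ainv op hq e]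
  rw [h1, hm]

lemma tAdd_comm (hm : IsMedial op) (x y : Q) : tAdd op hq e x y = tAdd op hq e y x := by
  apply (Rq op hq (tZero op e)).injective
  show op (tAdd op hq e x y) (op e e) = op (tAdd op hq e y x) (op e e)
  unfold tAdd
  calc op (op (Ainv op hq e x) (Binv op hq e y)) (op e e)
      = op (op (Ainv op hq e x) e) (op (Binv op hq e y) e) := hm _ _ _ _
    _ = op x (op (Binv op hq e y) e) := by rw [op_Ainv op hq e]
    _ = op (op e (Binv op hq e x)) (op (Binv op hq e y) e) := by rw [op_Binv op hq e]
    _ = op (op e (Binv op hq e y)) (op (Binv op hq e x) e) := hm _ _ _ _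
    _ = op y (op (Binv op hq e x) e) := by rw [op_Binv op hq e]
    _ = op (op (Ainv op hq e y) e) (op (Binv op hq e x) e) := by rw [op_Ainv op hq e]
    _ = op (op (Ainv op hq e y) (Binv op hq e x)) (op e e) := (hm _ _ _ _).symm

lemma exchange (hm : IsMedial op) (a b c : Q) :
    op (Ainv op hq e (op a b)) c = op (Ainv op hq e (op a c)) b := by
  apply (Rq op hq (tZero op e)).injective
  show op _ (op e e) = op _ (op e e)
  calc op (op (Ainv op hq e (op a b)) c) (op e e)
      = op (op (Ainv op hq e (op a b)) e) (op c e) := hm _ _ _ _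
    _ = op (op a b) (op c e) := by rw [op_Ainv op hq e]
    _ = op (op a c) (op b e) := hm _ _ _ _
    _ = op (op (Ainv op hq e (op a c)) e) (op b e) := by rw [op_Ainv op hq e]
    _ = op (op (Ainv op hq e (op a c)) b) (op e e) := (hm _ _ _ _).symm

lemma tAdd_right_comm (hm : IsMedial op) (x y z : Q) :
    tAdd op hq e (tAdd op hq e x y) z = tAdd op hq e (tAdd op hq e x z) y := by
  unfold tAdd
  rw [exchange op hq e hm]

lemma tAdd_assoc (hm : IsMedial op) (x y z : Q) :
    tAdd op hq e (tAdd op hq e x y) z = tAdd op hq e x (tAdd op hq e y z) := by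
  rw [tAdd_comm op hq e hm x (tAdd op hq e y z),
    tAdd_right_comm op hq e hm y z x, tAdd_comm op hq e hm y x]

lemma tAdd_zero (x : Q) : tAdd op hq e x (tZero op e) = x := by
  unfold tAdd tZero
  rw [show Binv op hq e (op e e) = e from Binv_op op hq e e, op_Ainv op hq e]

lemma tZero_add (x : Q) : tAdd op hq e (tZero op e) x = x := by
  unfold tAdd tZero
  rw [show Ainv op hq e (op e e) = e from Ainv_op op hq e e, op_Binv op hq e]

lemma tNeg_add_cancel (x : Q) : tAdd op hq e (tNeg op hq e x) x = tZero op e := by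
  unfold tAdd tNeg
  rw [Ainv_op op hq e]
  exact (Rq op hq (Binv op hq e x)).apply_symm_apply _

/-- The abelian group structure induced on a medial quasigroup. -/
def toyGroup (hm : IsMedial op) : AddCommGroup Q := by
  letI : Zero Q := ⟨tZero op e⟩
  letI : Add Q := ⟨tAdd op hq e⟩
  letI : Neg Q := ⟨tNeg op hq e⟩
  exact
    { add_assoc := tAdd_assoc op hq e hm
      zero_add := tZero_add op hq e
      add_zero := tAdd_zero op hq e
      neg_add_cancel := tNeg_add_cancel op hq e
      add_comm := tAdd_comm op hq e hm
      nsmul := nsmulRec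
      zsmul := zsmulRec }

/-- Candidate automorphism φ (as a raw map): `R_e` shifted to fix zero. -/
def tPhi : Q → Q := fun x => tAdd op hq e (op x e) (tNeg op hq e (op (tZero op e) e))

/-- Candidate automorphism ψ (as a raw map). -/
def tPsi : Q → Q := fun y => tAdd op hq e (op e y) (tNeg op hq e (op e (tZero op e)))

/-- Candidate constant. -/
def tC : Q := tAdd op hq e (op (tZero op e) e) (op e (tZero op e))

lemma T6 (hm : IsMedial op) (x y : Q) :
    tAdd op hq e (op (tAdd op hq e x y) e) (op (tZero op e) e) =
      tAdd op hq e (op x e) (op y e) := by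
  unfold tAdd tZero
  rw [show Ainv op hq e (op (op (Ainv op hq e x) (Binv op hq e y)) e) =
      op (Ainv op hq e x) (Binv op hq e y) from Ainv_op op hq e _]
  rw [show Ainv op hq e (op x e) = x from Ainv_op op hq e x]
  apply (Lq op hq (op e e)).injective
  show op (op e e) _ = op (op e e) _
  calc op (op e e) (op (op (Ainv op hq e x) (Binv op hq e y)) (Binv op hq e (op (op e e) e)))
      = op (op e (op (Ainv op hq e x) (Binv op hq e y)))
          (op e (Binv op hq e (op (op e e) e))) := hm _ _ _ _
    _ = op (op e (op (Ainv op hq e x) (Binv op hq e y))) (op (op e e) e) := by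
        rw [op_Binv op hq e]
    _ = op (op (op (Ainv op hq e e) (Ainv op hq e x)) (op e (Binv op hq e y)))
          (op (op e e) e) := by rw [L_e_split op hq e hm]
    _ = op (op (op (Ainv op hq e e) (Ainv op hq e x)) (op e e))
          (op (op e (Binv op hq e y)) e) := hm _ _ _ _
    _ = op (op (op (Ainv op hq e e) (Ainv op hq e x)) (op e e)) (op y e) := by
        rw [op_Binv op hq e]
    _ = op (op e (op (Ainv op hq e x) e)) (op y e) := by
        rw [← L_e_split op hq e hm]
    _ = op (op e x) (op y e) := by rw [op_Ainv op hq e]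
    _ = op (op e x) (op e (Binv op hq e (op y e))) := by rw [op_Binv op hq e]
    _ = op (op e e) (op x (Binv op hq e (op y e))) := (hm _ _ _ _).symm

lemma R_e_split (hm : IsMedial op) (p q : Q) :
    op (op p q) e = op (op p (Ainv op hq e e)) (op q e) := by
  have h1 : op (op p q) e = op (op p q) (op (Ainv op hq e e) e) := by
    rw [op_Ainv op hq e]
  rw [h1, hm]

lemma T7 (hm : IsMedial op) (x y : Q) :
    tAdd op hq e (op e (tAdd op hq e x y)) (op e (tZero op e)) =
      tAdd op hq e (op e x) (op e y) := by
  unfold tAdd tZero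
  rw [show Binv op hq e (op e (op e e)) = op e e from Binv_op op hq e _]
  rw [show Binv op hq e (op e y) = y from Binv_op op hq e y]
  apply (Rq op hq (op e e)).injective
  show op _ (op e e) = op _ (op e e)
  have hL : op (op (Ainv op hq e (op e (op (Ainv op hq e x) (Binv op hq e y)))) (op e e))
      (op e e) =
      op (op (op (Ainv op hq e e) (Ainv op hq e x)) (op e (Ainv op hq e e)))
        (op (op e e) (op (Binv op hq e y) e)) := by
    calc op (op (Ainv op hq e (op e (op (Ainv op hq e x) (Binv op hq e y)))) (op e e)) (op e e)
        = op (op (Ainv op hq e (op e (op (Ainv op hq e x) (Binv op hq e y)))) e)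
            (op (op e e) e) := hm _ _ _ _
      _ = op (op e (op (Ainv op hq e x) (Binv op hq e y))) (op (op e e) e) := by
          rw [op_Ainv op hq e]
      _ = op (op (op (Ainv op hq e e) (Ainv op hq e x)) (op e (Binv op hq e y)))
            (op (op e e) e) := by rw [L_e_split op hq e hm]
      _ = op (op (op (Ainv op hq e e) (Ainv op hq e x)) (op e (Binv op hq e y)))
            (op (op e (Ainv op hq e e)) (op e e)) := by
          rw [R_e_split op hq e hm e e]
      _ = op (op (op (Ainv op hq e e) (Ainv op hq e x)) (op e (Ainv op hq e e)))
            (op (op e (Binv op hq e y)) (op e e)) := hm _ _ _ _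
      _ = op (op (op (Ainv op hq e e) (Ainv op hq e x)) (op e (Ainv op hq e e)))
            (op (op e e) (op (Binv op hq e y) e)) := by rw [hm e (Binv op hq e y) e e]
  have hR : op (op (Ainv op hq e (op e x)) y) (op e e) =
      op (op (op (Ainv op hq e e) (Ainv op hq e x)) (op e (Ainv op hq e e)))
        (op (op e e) (op (Binv op hq e y) e)) := by
    calc op (op (Ainv op hq e (op e x)) y) (op e e)
        = op (op (Ainv op hq e (op e x)) e) (op y e) := hm _ _ _ _
      _ = op (op e x) (op y e) := by rw [op_Ainv op hq e]
      _ = op (op e (op (Ainv op hq e x) e)) (op y e) := by rw [op_Ainv op hq e]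
      _ = op (op (op (Ainv op hq e e) (Ainv op hq e x)) (op e e)) (op y e) := by
          rw [L_e_split op hq e hm]
      _ = op (op (op (Ainv op hq e e) (Ainv op hq e x)) (op e e))
            (op (op e (Binv op hq e y)) e) := by rw [op_Binv op hq e]
      _ = op (op (op (Ainv op hq e e) (Ainv op hq e x)) (op e e))
            (op (op e (Ainv op hq e e)) (op (Binv op hq e y) e)) := by
          rw [R_e_split op hq e hm e (Binv op hq e y)]
      _ = op (op (op (Ainv op hq e e) (Ainv op hq e x)) (op e (Ainv op hq e e)))
            (op (op e e) (op (Binv op hq e y) e)) := hm _ _ _ _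
  exact hL.trans hR.symm

lemma sub_helper {G : Type*} [AddCommGroup G] {u v w k : G} (h : u + k = v + w) :
    u + -k = (v + -k) + (w + -k) := by
  have h2 : u = v + w - k := by rw [← h]; abel
  rw [h2]; abel

lemma tPhi_add (hm : IsMedial op) (x y : Q) :
    tPhi op hq e (tAdd op hq e x y) = tAdd op hq e (tPhi op hq e x) (tPhi op hq e y) := by
  letI := toyGroup op hq e hm
  exact sub_helper (T6 op hq e hm x y)

lemma tPsi_add (hm : IsMedial op) (x y : Q) :
    tPsi op hq e (tAdd op hq e x y) = tAdd op hq e (tPsi op hq e x) (tPsi op hq e y) := by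
  letI := toyGroup op hq e hm
  exact sub_helper (T7 op hq e hm x y)

lemma tPhi_bijective (hm : IsMedial op) : Function.Bijective (tPhi op hq e) := by
  letI := toyGroup op hq e hm
  have h : tPhi op hq e = (fun t => t + -(op (tZero op e) e)) ∘ (fun x => op x e) := rfl
  rw [h]
  exact (Equiv.addRight (-(op (tZero op e) e))).bijective.comp (hq.2 e)

lemma tPsi_bijective (hm : IsMedial op) : Function.Bijective (tPsi op hq e) := by
  letI := toyGroup op hq e hm
  have h : tPsi op hq e = (fun t => t + -(op e (tZero op e))) ∘ (fun y => op e y) := rfl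
  rw [h]
  exact (Equiv.addRight (-(op e (tZero op e)))).bijective.comp (hq.1 e)

lemma op_eq_affine (hm : IsMedial op) (x y : Q) :
    op x y = tAdd op hq e (tAdd op hq e (tPhi op hq e x) (tPsi op hq e y)) (tC op hq e) := by
  letI := toyGroup op hq e hm
  have h1 : tAdd op hq e (tAdd op hq e (tPhi op hq e x) (tPsi op hq e y)) (tC op hq e)
      = tAdd op hq e (op x e) (op e y) := by
    show (tPhi op hq e x + tPsi op hq e y) + tC op hq e = op x e + op e y
    unfold tPhi tPsi tC
    show ((op x e + -(op (tZero op e) e)) + (op e y + -(op e (tZero op e)))) +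
        ((op (tZero op e) e) + (op e (tZero op e))) = op x e + op e y
    abel
  rw [h1]
  show op x y = op (Ainv op hq e (op x e)) (Binv op hq e (op e y))
  rw [Ainv_op op hq e, Binv_op op hq e]

end Toyoda

end MQAux
namespace MQAux

noncomputable section Components

variable {A B X Y : Type*}

/-- Transport of a binary operation along an equiv. -/
def transportOp (op : X → X → X) (f : X ≃ Y) : Y → Y → Y :=
  fun x y => f (op (f.symm x) (f.symm y))

lemma iso_transportOp (op : X → X → X) (f : X ≃ Y) :
    QuasigroupIso op (transportOp op f) :=
  ⟨f, fun x y => by simp [transportOp]⟩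

/-- Product of two binary operations. -/
def prodOp (o1 : X → X → X) (o2 : Y → Y → Y) : X × Y → X × Y → X × Y :=
  fun p q => (o1 p.1 q.1, o2 p.2 q.2)

lemma isQuasigroup_prodOp {o1 : X → X → X} {o2 : Y → Y → Y}
    (h1 : IsQuasigroup o1) (h2 : IsQuasigroup o2) : IsQuasigroup (prodOp o1 o2) := by
  constructor
  · intro a
    have : (fun x => prodOp o1 o2 a x) =
        (Equiv.prodCongr (Equiv.ofBijective _ (h1.1 a.1)) (Equiv.ofBijective _ (h2.1 a.2))) := by
      funext x; rfl
    rw [this]; exact (Equiv.prodCongr _ _).bijective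
  · intro a
    have : (fun x => prodOp o1 o2 x a) =
        (Equiv.prodCongr (Equiv.ofBijective _ (h1.2 a.1)) (Equiv.ofBijective _ (h2.2 a.2))) := by
      funext x; rfl
    rw [this]; exact (Equiv.prodCongr _ _).bijective

lemma isMedial_prodOp {o1 : X → X → X} {o2 : Y → Y → Y}
    (h1 : IsMedial o1) (h2 : IsMedial o2) : IsMedial (prodOp o1 o2) := by
  intro x y u v
  unfold prodOp
  rw [h1, h2]

lemma quasigroupIso_prodOp {X' Y' : Type*} {o1 : X → X → X} {o2 : Y → Y → Y}
    {o1' : X' → X' → X'} {o2' : Y' → Y' → Y'}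
    (h1 : QuasigroupIso o1 o1') (h2 : QuasigroupIso o2 o2') :
    QuasigroupIso (prodOp o1 o2) (prodOp o1' o2') := by
  obtain ⟨f, hf⟩ := h1
  obtain ⟨g, hg⟩ := h2
  exact ⟨Equiv.prodCongr f g, fun x y => by
    simp [prodOp, Equiv.prodCongr_apply, Prod.map, hf, hg]⟩

/-- `a`-torsion subgroup. -/
def tors (a : ℕ) (A : Type*) [AddCommGroup A] : AddSubgroup A where
  carrier := {x | (a : ℤ) • x = 0}
  zero_mem' := smul_zero _
  add_mem' := by
    intro x y hx hy
    simp only [Set.mem_setOf_eq, smul_add] at *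
    rw [hx, hy, add_zero]
  neg_mem' := by
    intro x hx
    simp only [Set.mem_setOf_eq, smul_neg] at *
    rw [hx, neg_zero]

lemma mem_tors [AddCommGroup A] {a : ℕ} {x : A} : x ∈ tors a A ↔ (a : ℤ) • x = 0 :=
  Iff.rfl

section Decomp

variable [AddCommGroup A]

lemma proj1_mem (a b : ℕ) (u v : ℤ) (htor : ∀ x : A, ((a * b : ℕ) : ℤ) • x = 0) (x : A) :
    (v * b) • x ∈ tors a A := by
  rw [mem_tors, smul_smul, show (a : ℤ) * (v * b) = v * ((a*b : ℕ) : ℤ) by push_cast; ring,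
    mul_smul, htor, smul_zero]

lemma proj2_mem (a b : ℕ) (u v : ℤ) (htor : ∀ x : A, ((a * b : ℕ) : ℤ) • x = 0) (x : A) :
    (u * a) • x ∈ tors b A := by
  rw [mem_tors, smul_smul, show (b : ℤ) * (u * a) = u * ((a*b : ℕ) : ℤ) by push_cast; ring,
    mul_smul, htor, smul_zero]

lemma proj1_eq_self (a b : ℕ) (u v : ℤ) (huv : u * a + v * b = 1) {x : A}
    (hx : x ∈ tors a A) : (v * b) • x = x := by
  have h : (v * b : ℤ) = 1 - u * a := by linarith [huv]
  rw [h, sub_smul, one_smul, mul_smul, hx, smul_zero, sub_zero]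

lemma proj2_eq_self (a b : ℕ) (u v : ℤ) (huv : u * a + v * b = 1) {x : A}
    (hx : x ∈ tors b A) : (u * a) • x = x := by
  have h : (u * a : ℤ) = 1 - v * b := by linarith [huv]
  rw [h, sub_smul, one_smul, mul_smul, hx, smul_zero, sub_zero]

lemma proj1_eq_zero (a b : ℕ) (v : ℤ) {x : A} (hx : x ∈ tors b A) : (v * b) • x = 0 := by
  rw [mul_smul, hx, smul_zero]

lemma proj2_eq_zero (a b : ℕ) (u : ℤ) {x : A} (hx : x ∈ tors a A) : (u * a) • x = 0 := by
  rw [mul_smul, hx, smul_zero]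

lemma proj_add (a b : ℕ) (u v : ℤ) (huv : u * a + v * b = 1) (x : A) :
    (v * b) • x + (u * a) • x = x := by
  rw [← add_smul, show v * b + u * a = 1 by linarith [huv], one_smul]

/-- The coprime torsion decomposition. -/
def torsDecomp (a b : ℕ) (u v : ℤ) (huv : u * a + v * b = 1)
    (htor : ∀ x : A, ((a * b : ℕ) : ℤ) • x = 0) : A ≃+ tors a A × tors b A where
  toFun x := (⟨(v * b) • x, proj1_mem a b u v htor x⟩,
    ⟨(u * a) • x, proj2_mem a b u v htor x⟩)
  invFun p := (p.1 : A) + (p.2 : A)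
  left_inv x := proj_add a b u v huv x
  right_inv p := by
    obtain ⟨⟨y, hy⟩, ⟨z, hz⟩⟩ := p
    simp only [Prod.mk.injEq]
    constructor
    · apply Subtype.ext
      simp only [smul_add]
      rw [proj1_eq_self a b u v huv hy, proj1_eq_zero a b v hz, add_zero]
    · apply Subtype.ext
      simp only [smul_add]
      rw [proj2_eq_self a b u v huv hz, proj2_eq_zero a b u hy, zero_add]
  map_add' x y := by
    simp only [smul_add, Prod.mk_add_mk]
    rfl

end Decomp

/-- Restriction of an additive equivalence to torsion subgroups. -/
def resE [AddCommGroup A] [AddCommGroup B] (a : ℕ) (σ : A ≃+ B) :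
    tors a A ≃+ tors a B where
  toFun x := ⟨σ x, by
    rw [mem_tors, ← map_zsmul σ, (mem_tors.mp x.2 : _), map_zero]⟩
  invFun y := ⟨σ.symm y, by
    rw [mem_tors, ← map_zsmul σ.symm, (mem_tors.mp y.2 : _), map_zero]⟩
  left_inv x := by apply Subtype.ext; simp
  right_inv y := by apply Subtype.ext; simp
  map_add' x y := by apply Subtype.ext; simp

@[simp] lemma resE_apply [AddCommGroup A] [AddCommGroup B] (a : ℕ) (σ : A ≃+ B)
    (x : tors a A) : (resE a σ x : B) = σ x := rfl

end Components

end MQAux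
namespace MQAux

noncomputable section Comp2

variable {A B : Type*}

lemma prime_dvd_card_tors [AddCommGroup A] [Finite A] (a p : ℕ) (hp : p.Prime)
    (hdvd : p ∣ Nat.card (tors a A)) : p ∣ a := by
  letI : Fintype (tors a A) := Fintype.ofFinite _
  rw [Nat.card_eq_fintype_card] at hdvd
  haveI : Fact p.Prime := ⟨hp⟩
  obtain ⟨x, hx⟩ := exists_prime_addOrderOf_dvd_card p hdvd
  have hax : a • x = 0 := by
    apply Subtype.ext
    have h2 := (mem_tors.mp x.2 : (a : ℤ) • (x : A) = 0)
    rw [natCast_zsmul] at h2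
    simpa using h2
  have := addOrderOf_dvd_of_nsmul_eq_zero hax
  rwa [hx] at this

lemma coprime_card_tors [AddCommGroup A] [Finite A] (a b : ℕ) (hb : 0 < b)
    (hco : Nat.Coprime a b) : Nat.Coprime (Nat.card (tors a A)) b := by
  by_contra hg
  have hgcd : Nat.gcd (Nat.card (tors a A)) b ≠ 1 := hg
  set p := (Nat.gcd (Nat.card (tors a A)) b).minFac with hp
  have hpp : p.Prime := Nat.minFac_prime hgcd
  have hps : p ∣ Nat.card (tors a A) := (Nat.minFac_dvd _).trans (Nat.gcd_dvd_left _ _)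
  have hpb : p ∣ b := (Nat.minFac_dvd _).trans (Nat.gcd_dvd_right _ _)
  have hpa : p ∣ a := prime_dvd_card_tors a p hpp hps
  have : p ∣ 1 := hco ▸ Nat.dvd_gcd hpa hpb
  exact hpp.one_lt.ne' (Nat.dvd_one.mp this)

lemma card_tors_eq [AddCommGroup A] [Finite A] (a b : ℕ) (ha : 0 < a) (hb : 0 < b)
    (hco : Nat.Coprime a b) (u v : ℤ) (huv : u * a + v * b = 1)
    (hcard : Nat.card A = a * b) :
    Nat.card (tors a A) = a ∧ Nat.card (tors b A) = b := by
  have htor : ∀ x : A, ((a * b : ℕ) : ℤ) • x = 0 := by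
    intro x
    rw [← hcard, natCast_zsmul]
    exact card_nsmul_eq_zero'
  have hcc := Nat.card_congr (torsDecomp a b u v huv htor).toEquiv
  rw [hcard, Nat.card_prod] at hcc
  replace hcc := hcc.symm
  set s := Nat.card (tors a A) with hs
  set t := Nat.card (tors b A) with ht
  have hsb : Nat.Coprime s b := coprime_card_tors a b hb hco
  have hta : Nat.Coprime t a := coprime_card_tors b a ha hco.symm
  have hsdvd : s ∣ a := by
    have h1 : s ∣ a * b := Dvd.intro t hcc
    exact (Nat.Coprime.dvd_of_dvd_mul_right hsb h1)
  have htdvd : t ∣ b := by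
    have h1 : t ∣ a * b := Dvd.intro_left s hcc
    exact (Nat.Coprime.dvd_of_dvd_mul_left hta h1)
  obtain ⟨k, hk⟩ := hsdvd
  obtain ⟨l, hl⟩ := htdvd
  have hspos : 0 < s := Nat.card_pos
  have htpos : 0 < t := Nat.card_pos
  have : (s * t) * (k * l) = (s * t) * 1 := by
    rw [mul_one]
    calc s * t * (k * l) = (s * k) * (t * l) := by ring
      _ = a * b := by rw [← hk, ← hl]
      _ = s * t := hcc.symm
  have hkl : k * l = 1 := Nat.eq_of_mul_eq_mul_left (Nat.mul_pos hspos htpos) this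
  have hk1 : k = 1 := Nat.eq_one_of_mul_eq_one_right hkl
  have hl1 : l = 1 := Nat.eq_one_of_mul_eq_one_left hkl
  constructor
  · rw [hk, hk1, mul_one]
  · rw [hl, hl1, mul_one]

section COp

variable [AddCommGroup A] (φ ψ : A ≃+ A) (c : A) (a b : ℕ) (u v : ℤ)

/-- The component operation on the `a`-torsion part. -/
def cOp1 (htor : ∀ x : A, ((a * b : ℕ) : ℤ) • x = 0) :
    tors a A → tors a A → tors a A :=
  affOp (resE a φ) (resE a ψ) ⟨(v * b) • c, proj1_mem a b u v htor c⟩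

lemma isQuasigroup_cOp1 (htor : ∀ x : A, ((a * b : ℕ) : ℤ) • x = 0) :
    IsQuasigroup (cOp1 φ ψ c a b u v htor) :=
  isQuasigroup_affOp _ _ _

lemma isMedial_cOp1 (htor : ∀ x : A, ((a * b : ℕ) : ℤ) • x = 0)
    (hcomm : ∀ x, φ (ψ x) = ψ (φ x)) : IsMedial (cOp1 φ ψ c a b u v htor) :=
  isMedial_affOp _ (fun x => Subtype.ext (hcomm x))

lemma htor_swap (htor : ∀ x : A, ((a * b : ℕ) : ℤ) • x = 0) :
    ∀ x : A, ((b * a : ℕ) : ℤ) • x = 0 := by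
  intro x
  rw [show b * a = a * b from Nat.mul_comm b a]
  exact htor x

/-- The component operation on the `b`-torsion part. -/
def cOp2 (htor : ∀ x : A, ((a * b : ℕ) : ℤ) • x = 0) :
    tors b A → tors b A → tors b A :=
  cOp1 φ ψ c b a v u (htor_swap a b htor)

/-- The decomposition of an affine operation into its two component operations. -/
lemma decomp_iso (huv : u * a + v * b = 1) (htor : ∀ x : A, ((a * b : ℕ) : ℤ) • x = 0) :
    QuasigroupIso (affOp φ ψ c)
      (prodOp (cOp1 φ ψ c a b u v htor) (cOp2 φ ψ c a b u v htor)) := by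
  refine ⟨(torsDecomp a b u v huv htor).toEquiv, fun x y => ?_⟩
  apply Prod.ext
  · apply Subtype.ext
    show (v * b) • (affOp φ ψ c x y) = φ ((v * b) • x) + ψ ((v * b) • y) + (v * b) • c
    simp only [affOp, smul_add, map_zsmul]
  · apply Subtype.ext
    show (u * a) • (affOp φ ψ c x y) = φ ((u * a) • x) + ψ ((u * a) • y) + (u * a) • c
    simp only [affOp, smul_add, map_zsmul]

end COp

/-- Master well-definedness: isomorphic affine operations have isomorphic
`a`-torsion components. -/
lemma cOp1_iso [AddCommGroup A] [AddCommGroup B]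
    (φA ψA : A ≃+ A) (cA : A) (φB ψB : B ≃+ B) (cB : B) (a b : ℕ) (u v : ℤ)
    (htorA : ∀ x : A, ((a * b : ℕ) : ℤ) • x = 0)
    (htorB : ∀ x : B, ((a * b : ℕ) : ℤ) • x = 0)
    (hAB : QuasigroupIso (affOp φA ψA cA) (affOp φB ψB cB)) :
    QuasigroupIso (cOp1 φA ψA cA a b u v htorA) (cOp1 φB ψB cB a b u v htorB) := by
  obtain ⟨f, hf⟩ := hAB
  obtain ⟨σ, hft, hφ, hψ, hc⟩ := affine_of_iso f hf
  refine ⟨(resE a σ).toEquiv.trans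
    (Equiv.addRight (⟨(v * b) • (f 0), proj1_mem a b u v htorB (f 0)⟩ : tors a B)),
    fun x y => ?_⟩
  apply Subtype.ext
  show σ ((cOp1 φA ψA cA a b u v htorA x y : A)) + (v * b) • (f 0) =
    φB (σ (x : A) + (v * b) • (f 0)) + ψB (σ (y : A) + (v * b) • (f 0)) + (v * b) • cB
  show σ (φA x + ψA y + (v * b) • cA) + (v * b) • (f 0) =
    φB (σ (x : A) + (v * b) • (f 0)) + ψB (σ (y : A) + (v * b) • (f 0)) + (v * b) • cB
  have expand1 : σ (φA x + ψA y + (v * b) • cA) + (v * b) • (f 0) =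
      φB (σ (x : A)) + ψB (σ (y : A)) + ((v * b) • (σ cA + f 0)) := by
    rw [map_add, map_add, map_zsmul, hφ, hψ, smul_add]
    abel
  have expand2 : φB (σ (x : A) + (v * b) • (f 0)) + ψB (σ (y : A) + (v * b) • (f 0)) +
      (v * b) • cB =
      φB (σ (x : A)) + ψB (σ (y : A)) + ((v * b) • (φB (f 0) + ψB (f 0) + cB)) := by
    rw [map_add, map_add, map_zsmul, map_zsmul, smul_add, smul_add]
    abel
  rw [expand1, expand2, hc]

end Comp2

end MQAux
namespace MQAux

noncomputable section Part1

/-- Affine data with commuting automorphisms. -/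
def CommData (G : Type*) [AddCommGroup G] :=
  {d : (G ≃+ G) × (G ≃+ G) × G // ∀ x, d.1 (d.2.1 x) = d.2.1 (d.1 x)}

variable {G H : Type*}

/-- The operation attached to affine data. -/
def dOp [AddCommGroup G] (d : CommData G) : G → G → G := affOp d.1.1 d.1.2.1 d.1.2.2

/-- Isomorphism relation on affine data. -/
def dRel [AddCommGroup G] (d d' : CommData G) : Prop := QuasigroupIso (dOp d) (dOp d')

lemma dRel_equivalence (G : Type*) [AddCommGroup G] : Equivalence (@dRel G _) :=
  ⟨fun d => quasigroupIso_refl _, fun h => QuasigroupIso.symm h, fun h h' => QuasigroupIso.trans h h'⟩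

/-- The subtype of operations counted by `mqG`. -/
def OpsT (G : Type*) [AddCommGroup G] :=
  {op : G → G → G // IsQuasigroup op ∧ IsMedial op ∧ AdmitsAffineForm op G}

def opRel [AddCommGroup G] (o o' : OpsT G) : Prop := QuasigroupIso o.1 o'.1

lemma opRel_equivalence (G : Type*) [AddCommGroup G] : Equivalence (@opRel G _) :=
  ⟨fun o => quasigroupIso_refl _, fun h => QuasigroupIso.symm h, fun h h' => QuasigroupIso.trans h h'⟩

/-- From data to operations. -/
def dataToOp [AddCommGroup G] (d : CommData G) : OpsT G :=
  ⟨dOp d, isQuasigroup_affOp _ _ _, isMedial_affOp _ d.2,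
    ⟨Equiv.refl G, d.1.1, d.1.2.1, d.1.2.2, fun x y => rfl⟩⟩

lemma mqG_eq_card_dataQuot (G : Type*) [AddCommGroup G] :
    mqG G = Nat.card (Quot (@dRel G _)) := by
  have hbij : Function.Bijective
      (Quot.lift (fun d : CommData G => Quot.mk (@opRel G _) (dataToOp d))
        (fun d d' h => Quot.sound h) : Quot (@dRel G _) → Quot (@opRel G _)) := by
    constructor
    · intro q1 q2
      induction q1 using Quot.ind with | _ d =>
      induction q2 using Quot.ind with | _ d' =>
      intro h
      simp only [Quot.lift_mk] at h
      rw [Quot.eq] at h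
      have h2 := (Equivalence.eqvGen_iff (opRel_equivalence G)).mp h
      exact Quot.sound h2
    · intro q
      induction q using Quot.ind with | _ o =>
      obtain ⟨hq, hmed, e, φ, ψ, c, haff⟩ := o.2
      have hiso : QuasigroupIso o.1 (affOp φ ψ c) := ⟨e, fun x y => haff x y⟩
      have hm2 : IsMedial (affOp φ ψ c) := IsMedial.of_iso hiso hmed
      have hcomm := commute_of_isMedial_affOp hm2
      refine ⟨Quot.mk _ (⟨(φ, ψ, c), hcomm⟩ : CommData G), ?_⟩
      simp only [Quot.lift_mk]
      apply Quot.sound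
      exact (QuasigroupIso.symm hiso : QuasigroupIso (affOp φ ψ c) o.1)
  have := Nat.card_eq_of_bijective _ hbij
  exact this.symm

section Split

variable [AddCommGroup G] [AddCommGroup H] [Finite G] [Finite H]

lemma lagrange (x : G) : ((Nat.card G : ℕ) : ℤ) • x = 0 := by
  rw [natCast_zsmul]
  exact card_nsmul_eq_zero'

lemma eq_zero_of_coprime_torsion (a : ℕ) (hco : Nat.Coprime a (Nat.card H))
    {x : H} (hx : (a : ℤ) • x = 0) : x = 0 := by
  obtain ⟨u, v, huv⟩ := (Nat.isCoprime_iff_coprime.mpr hco : IsCoprime (a : ℤ) (Nat.card H))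
  calc x = (1 : ℤ) • x := (one_smul _ _).symm
    _ = (u * a + v * (Nat.card H)) • x := by rw [huv]
    _ = u • ((a : ℤ) • x) + v • (((Nat.card H : ℕ) : ℤ) • x) := by
        rw [add_smul, mul_smul, mul_smul]
    _ = 0 := by rw [hx, lagrange, smul_zero, smul_zero, add_zero]

variable (hco : Nat.Coprime (Nat.card G) (Nat.card H))

lemma aut_fst_snd (hco : Nat.Coprime (Nat.card G) (Nat.card H))
    (φ : (G × H) ≃+ (G × H)) (g : G) : (φ (g, 0)).2 = 0 := by
  apply eq_zero_of_coprime_torsion (Nat.card G) hco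
  have h1 : ((Nat.card G : ℕ) : ℤ) • φ (g, 0) = 0 := by
    rw [← map_zsmul]
    have : ((Nat.card G : ℕ) : ℤ) • ((g, 0) : G × H) = 0 := by
      apply Prod.ext
      · exact lagrange g
      · simp
    rw [this, map_zero]
  calc ((Nat.card G : ℕ) : ℤ) • (φ (g, 0)).2 = (((Nat.card G : ℕ) : ℤ) • φ (g, 0)).2 := rfl
    _ = 0 := by rw [h1]; rfl

lemma aut_snd_fst (hco : Nat.Coprime (Nat.card G) (Nat.card H))
    (φ : (G × H) ≃+ (G × H)) (h : H) : (φ (0, h)).1 = 0 := by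
  apply eq_zero_of_coprime_torsion (Nat.card H) hco.symm
  have h1 : ((Nat.card H : ℕ) : ℤ) • φ (0, h) = 0 := by
    rw [← map_zsmul]
    have : ((Nat.card H : ℕ) : ℤ) • ((0, h) : G × H) = 0 := by
      apply Prod.ext
      · simp
      · exact lagrange h
    rw [this, map_zero]
  calc ((Nat.card H : ℕ) : ℤ) • (φ (0, h)).1 = (((Nat.card H : ℕ) : ℤ) • φ (0, h)).1 := rfl
    _ = 0 := by rw [h1]; rfl

/-- First component of an automorphism of a coprime product. -/
def autG (hco : Nat.Coprime (Nat.card G) (Nat.card H)) (φ : (G × H) ≃+ (G × H)) :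
    G ≃+ G := by
  refine AddEquiv.mk' (Equiv.mk (fun g => (φ (g, 0)).1) (fun g => (φ.symm (g, 0)).1)
    ?_ ?_) ?_
  · intro g
    have hsnd : φ (g, 0) = ((φ (g, 0)).1, 0) := by
      apply Prod.ext
      · rfl
      · exact aut_fst_snd hco φ g
    show (φ.symm ((φ (g, 0)).1, 0)).1 = g
    rw [← hsnd, φ.symm_apply_apply]
  · intro g
    have hsnd : φ.symm (g, 0) = ((φ.symm (g, 0)).1, 0) := by
      apply Prod.ext
      · rfl
      · exact aut_fst_snd hco φ.symm g
    show (φ ((φ.symm (g, 0)).1, 0)).1 = g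
    rw [← hsnd, φ.apply_symm_apply]
  · intro x y
    show (φ (x + y, 0)).1 = (φ (x, 0)).1 + (φ (y, 0)).1
    have hxy : ((x + y, 0) : G × H) = (x, 0) + (y, 0) := by
      rw [Prod.mk_add_mk, add_zero]
    rw [hxy, map_add]
    rfl

/-- Second component of an automorphism of a coprime product. -/
def autH (hco : Nat.Coprime (Nat.card G) (Nat.card H)) (φ : (G × H) ≃+ (G × H)) :
    H ≃+ H := by
  refine AddEquiv.mk' (Equiv.mk (fun h => (φ (0, h)).2) (fun h => (φ.symm (0, h)).2)
    ?_ ?_) ?_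
  · intro h
    have hfst : φ (0, h) = (0, (φ (0, h)).2) := by
      apply Prod.ext
      · exact aut_snd_fst hco φ h
      · rfl
    show (φ.symm (0, (φ (0, h)).2)).2 = h
    rw [← hfst, φ.symm_apply_apply]
  · intro h
    have hfst : φ.symm (0, h) = (0, (φ.symm (0, h)).2) := by
      apply Prod.ext
      · exact aut_snd_fst hco φ.symm h
      · rfl
    show (φ (0, (φ.symm (0, h)).2)).2 = h
    rw [← hfst, φ.apply_symm_apply]
  · intro x y
    show (φ (0, x + y)).2 = (φ (0, x)).2 + (φ (0, y)).2
    have hxy : ((0, x + y) : G × H) = (0, x) + (0, y) := by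
      rw [Prod.mk_add_mk, add_zero]
    rw [hxy, map_add]
    rfl

lemma aut_prod_eq (hco : Nat.Coprime (Nat.card G) (Nat.card H))
    (φ : (G × H) ≃+ (G × H)) (g : G) (h : H) :
    φ (g, h) = (autG hco φ g, autH hco φ h) := by
  have : (g, h) = ((g, 0) : G × H) + (0, h) := by simp
  rw [this, map_add]
  apply Prod.ext
  · show (φ (g, 0)).1 + (φ (0, h)).1 = autG hco φ g
    rw [aut_snd_fst hco φ h, add_zero]
    rfl
  · show (φ (g, 0)).2 + (φ (0, h)).2 = autH hco φ h
    rw [aut_fst_snd hco φ g, zero_add]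
    rfl

end Split

end Part1

end MQAux
namespace MQAux

noncomputable section Part1b

variable {G H : Type*} [AddCommGroup G] [AddCommGroup H] [Finite G] [Finite H]

/-- Splitting affine data over a coprime product. -/
def dataSplit (hco : Nat.Coprime (Nat.card G) (Nat.card H)) (d : CommData (G × H)) :
    CommData G × CommData H :=
  (⟨(autG hco d.1.1, autG hco d.1.2.1, d.1.2.2.1), by
      intro x
      have h := congrArg Prod.fst (d.2 (x, 0))
      have h1 : d.1.1 (d.1.2.1 (x, 0)) = (autG hco d.1.1 (autG hco d.1.2.1 x), 0) := by
        rw [show d.1.2.1 ((x, 0) : G × H) = (autG hco d.1.2.1 x, 0) by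
          rw [aut_prod_eq hco, map_zero], aut_prod_eq hco, map_zero]
      have h2 : d.1.2.1 (d.1.1 (x, 0)) = (autG hco d.1.2.1 (autG hco d.1.1 x), 0) := by
        rw [show d.1.1 ((x, 0) : G × H) = (autG hco d.1.1 x, 0) by
          rw [aut_prod_eq hco, map_zero], aut_prod_eq hco, map_zero]
      rw [h1, h2] at h
      exact h⟩,
   ⟨(autH hco d.1.1, autH hco d.1.2.1, d.1.2.2.2), by
      intro x
      have h := congrArg Prod.snd (d.2 (0, x))
      have h1 : d.1.1 (d.1.2.1 (0, x)) = (0, autH hco d.1.1 (autH hco d.1.2.1 x)) := by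
        rw [show d.1.2.1 ((0, x) : G × H) = (0, autH hco d.1.2.1 x) by
          rw [aut_prod_eq hco, map_zero], aut_prod_eq hco, map_zero]
      have h2 : d.1.2.1 (d.1.1 (0, x)) = (0, autH hco d.1.2.1 (autH hco d.1.1 x)) := by
        rw [show d.1.1 ((0, x) : G × H) = (0, autH hco d.1.1 x) by
          rw [aut_prod_eq hco, map_zero], aut_prod_eq hco, map_zero]
      rw [h1, h2] at h
      exact h⟩)

/-- Combining affine data over a product. -/
def dataCombine (p : CommData G × CommData H) : CommData (G × H) :=
  ⟨(AddEquiv.prodCongr p.1.1.1 p.2.1.1, AddEquiv.prodCongr p.1.1.2.1 p.2.1.2.1,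
    (p.1.1.2.2, p.2.1.2.2)), by
    intro x
    apply Prod.ext
    · exact p.1.2 x.1
    · exact p.2.2 x.2⟩

lemma dOp_dataCombine (p : CommData G × CommData H) :
    dOp (dataCombine p) = prodOp (dOp p.1) (dOp p.2) := rfl

lemma dataCombine_dataSplit (hco : Nat.Coprime (Nat.card G) (Nat.card H))
    (d : CommData (G × H)) : dataCombine (dataSplit hco d) = d := by
  apply Subtype.ext
  refine Prod.ext ?_ (Prod.ext ?_ ?_)
  · apply AddEquiv.ext
    intro x
    show (autG hco d.1.1 x.1, autH hco d.1.1 x.2) = d.1.1 x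
    rw [← aut_prod_eq hco]
  · apply AddEquiv.ext
    intro x
    show (autG hco d.1.2.1 x.1, autH hco d.1.2.1 x.2) = d.1.2.1 x
    rw [← aut_prod_eq hco]
  · rfl

lemma dataSplit_dataCombine (hco : Nat.Coprime (Nat.card G) (Nat.card H))
    (p : CommData G × CommData H) : dataSplit hco (dataCombine p) = p := by
  refine Prod.ext (Subtype.ext ?_) (Subtype.ext ?_)
  · refine Prod.ext ?_ (Prod.ext ?_ ?_)
    · apply AddEquiv.ext
      intro x
      show ((AddEquiv.prodCongr p.1.1.1 p.2.1.1) (x, 0)).1 = p.1.1.1 x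
      rfl
    · apply AddEquiv.ext
      intro x
      rfl
    · rfl
  · refine Prod.ext ?_ (Prod.ext ?_ ?_)
    · apply AddEquiv.ext
      intro x
      rfl
    · apply AddEquiv.ext
      intro x
      rfl
    · rfl

lemma dRel_split (hco : Nat.Coprime (Nat.card G) (Nat.card H))
    {d d' : CommData (G × H)} (h : dRel d d') :
    dRel (dataSplit hco d).1 (dataSplit hco d').1 ∧
      dRel (dataSplit hco d).2 (dataSplit hco d').2 := by
  obtain ⟨f, hf⟩ := h
  obtain ⟨σ, hft, hφ, hψ, hc⟩ := affine_of_iso f hf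
  constructor
  · refine ⟨(autG hco σ).toEquiv.trans (Equiv.addRight (f 0).1), fun x y => ?_⟩
    have hφ1 : ∀ g : G, autG hco σ (autG hco d.1.1 g) = autG hco d'.1.1 (autG hco σ g) := by
      intro g
      have h2 := congrArg Prod.fst (hφ (g, 0))
      rw [show d.1.1 ((g, 0) : G × H) = (autG hco d.1.1 g, 0) by
          rw [aut_prod_eq hco, map_zero],
        show σ ((g, 0) : G × H) = (autG hco σ g, 0) by rw [aut_prod_eq hco, map_zero],
        aut_prod_eq hco, aut_prod_eq hco] at h2
      exact h2
    have hψ1 : ∀ g : G, autG hco σ (autG hco d.1.2.1 g) =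
        autG hco d'.1.2.1 (autG hco σ g) := by
      intro g
      have h2 := congrArg Prod.fst (hψ (g, 0))
      rw [show d.1.2.1 ((g, 0) : G × H) = (autG hco d.1.2.1 g, 0) by
          rw [aut_prod_eq hco, map_zero],
        show σ ((g, 0) : G × H) = (autG hco σ g, 0) by rw [aut_prod_eq hco, map_zero],
        aut_prod_eq hco, aut_prod_eq hco] at h2
      exact h2
    have hc1 : autG hco σ d.1.2.2.1 + (f 0).1 =
        autG hco d'.1.1 (f 0).1 + autG hco d'.1.2.1 (f 0).1 + d'.1.2.2.1 := by
      have h2 := congrArg Prod.fst hc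
      rw [show σ d.1.2.2 = (autG hco σ d.1.2.2.1, autH hco σ d.1.2.2.2) from
          aut_prod_eq hco σ _ _,
        show d'.1.1 (f 0) = (autG hco d'.1.1 (f 0).1, autH hco d'.1.1 (f 0).2) from
          aut_prod_eq hco _ _ _,
        show d'.1.2.1 (f 0) = (autG hco d'.1.2.1 (f 0).1, autH hco d'.1.2.1 (f 0).2) from
          aut_prod_eq hco _ _ _] at h2
      exact h2
    show autG hco σ (dOp (dataSplit hco d).1 x y) + (f 0).1 =
      dOp (dataSplit hco d').1 (autG hco σ x + (f 0).1) (autG hco σ y + (f 0).1)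
    show autG hco σ (autG hco d.1.1 x + autG hco d.1.2.1 y + d.1.2.2.1) + (f 0).1 =
      autG hco d'.1.1 (autG hco σ x + (f 0).1) + autG hco d'.1.2.1 (autG hco σ y + (f 0).1) +
        d'.1.2.2.1
    rw [map_add, map_add, hφ1, hψ1, map_add, map_add]
    rw [show autG hco d'.1.1 (autG hco σ x) + autG hco d'.1.1 ((f 0).1) +
        (autG hco d'.1.2.1 (autG hco σ y) + autG hco d'.1.2.1 ((f 0).1)) + d'.1.2.2.1 =
        autG hco d'.1.1 (autG hco σ x) + autG hco d'.1.2.1 (autG hco σ y) +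
        (autG hco d'.1.1 ((f 0).1) + autG hco d'.1.2.1 ((f 0).1) + d'.1.2.2.1) by abel,
      ← hc1]
    abel
  · refine ⟨(autH hco σ).toEquiv.trans (Equiv.addRight (f 0).2), fun x y => ?_⟩
    have hφ1 : ∀ g : H, autH hco σ (autH hco d.1.1 g) = autH hco d'.1.1 (autH hco σ g) := by
      intro g
      have h2 := congrArg Prod.snd (hφ (0, g))
      rw [show d.1.1 ((0, g) : G × H) = (0, autH hco d.1.1 g) by
          rw [aut_prod_eq hco, map_zero],
        show σ ((0, g) : G × H) = (0, autH hco σ g) by rw [aut_prod_eq hco, map_zero],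
        aut_prod_eq hco, aut_prod_eq hco] at h2
      exact h2
    have hψ1 : ∀ g : H, autH hco σ (autH hco d.1.2.1 g) =
        autH hco d'.1.2.1 (autH hco σ g) := by
      intro g
      have h2 := congrArg Prod.snd (hψ (0, g))
      rw [show d.1.2.1 ((0, g) : G × H) = (0, autH hco d.1.2.1 g) by
          rw [aut_prod_eq hco, map_zero],
        show σ ((0, g) : G × H) = (0, autH hco σ g) by rw [aut_prod_eq hco, map_zero],
        aut_prod_eq hco, aut_prod_eq hco] at h2
      exact h2
    have hc1 : autH hco σ d.1.2.2.2 + (f 0).2 =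
        autH hco d'.1.1 (f 0).2 + autH hco d'.1.2.1 (f 0).2 + d'.1.2.2.2 := by
      have h2 := congrArg Prod.snd hc
      rw [show σ d.1.2.2 = (autG hco σ d.1.2.2.1, autH hco σ d.1.2.2.2) from
          aut_prod_eq hco σ _ _,
        show d'.1.1 (f 0) = (autG hco d'.1.1 (f 0).1, autH hco d'.1.1 (f 0).2) from
          aut_prod_eq hco _ _ _,
        show d'.1.2.1 (f 0) = (autG hco d'.1.2.1 (f 0).1, autH hco d'.1.2.1 (f 0).2) from
          aut_prod_eq hco _ _ _] at h2
      exact h2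
    show autH hco σ (dOp (dataSplit hco d).2 x y) + (f 0).2 =
      dOp (dataSplit hco d').2 (autH hco σ x + (f 0).2) (autH hco σ y + (f 0).2)
    show autH hco σ (autH hco d.1.1 x + autH hco d.1.2.1 y + d.1.2.2.2) + (f 0).2 =
      autH hco d'.1.1 (autH hco σ x + (f 0).2) + autH hco d'.1.2.1 (autH hco σ y + (f 0).2) +
        d'.1.2.2.2
    rw [map_add, map_add, hφ1, hψ1, map_add, map_add]
    rw [show autH hco d'.1.1 (autH hco σ x) + autH hco d'.1.1 ((f 0).2) +
        (autH hco d'.1.2.1 (autH hco σ y) + autH hco d'.1.2.1 ((f 0).2)) + d'.1.2.2.2 =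
        autH hco d'.1.1 (autH hco σ x) + autH hco d'.1.2.1 (autH hco σ y) +
        (autH hco d'.1.1 ((f 0).2) + autH hco d'.1.2.1 ((f 0).2) + d'.1.2.2.2) by abel,
      ← hc1]
    abel

lemma dRel_combine {p p' : CommData G × CommData H}
    (h1 : dRel p.1 p'.1) (h2 : dRel p.2 p'.2) :
    dRel (dataCombine p) (dataCombine p') := by
  rw [dRel, dOp_dataCombine, dOp_dataCombine]
  exact quasigroupIso_prodOp h1 h2

/-- Part 1 of the theorem. -/
theorem part1 (G H : Type*) [AddCommGroup G] [AddCommGroup H] [Finite G] [Finite H]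
    (hco : Nat.Coprime (Nat.card G) (Nat.card H)) : mqG (G × H) = mqG G * mqG H := by
  rw [mqG_eq_card_dataQuot, mqG_eq_card_dataQuot, mqG_eq_card_dataQuot]
  have key : Nat.card (Quot (@dRel (G × H) _)) =
      Nat.card (Quot (@dRel G _) × Quot (@dRel H _)) := by
    apply Nat.card_congr
    refine Equiv.mk
      (Quot.lift (fun d => (Quot.mk _ (dataSplit hco d).1, Quot.mk _ (dataSplit hco d).2))
        (fun d d' h => by
          obtain ⟨h1, h2⟩ := dRel_split hco h
          exact Prod.ext (Quot.sound h1) (Quot.sound h2)))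
      (fun p => Quot.lift₂ (fun d1 d2 => Quot.mk _ (dataCombine (d1, d2)))
        (fun a b1 b2 hb => Quot.sound
          (dRel_combine (p := (a, b1)) (p' := (a, b2)) (quasigroupIso_refl _) hb))
        (fun a1 a2 b ha => Quot.sound
          (dRel_combine (p := (a1, b)) (p' := (a2, b)) ha (quasigroupIso_refl _)))
        p.1 p.2)
      ?_ ?_
    · intro q
      induction q using Quot.ind with | _ d =>
      exact congrArg (Quot.mk (@dRel (G × H) _)) (dataCombine_dataSplit hco d)
    · intro p
      obtain ⟨q1, q2⟩ := p
      induction q1 using Quot.ind with | _ d1 =>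
      induction q2 using Quot.ind with | _ d2 =>
      exact congrArg (fun z : CommData G × CommData H =>
        (Quot.mk (@dRel G _) z.1, Quot.mk (@dRel H _) z.2))
        (dataSplit_dataCombine hco (d1, d2))
  rw [key, Nat.card_prod]

end Part1b

end MQAux
namespace MQAux

noncomputable section Part2a

/-- The subtype of operations counted by `mqN`. -/
def OpsN (n : ℕ) := {op : Fin n → Fin n → Fin n // IsQuasigroup op ∧ IsMedial op}

def nRel {n : ℕ} (o o' : OpsN n) : Prop := QuasigroupIso o.1 o'.1

lemma mqN_eq_card (n : ℕ) : mqN n = Nat.card (Quot (@nRel n)) := rfl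

lemma nat_card_fin (n : ℕ) : Nat.card (Fin n) = n :=
  Nat.card_eq_of_equiv_fin (Equiv.refl _)

lemma mqN_one : mqN 1 = 1 := by
  rw [mqN_eq_card]
  have hop : IsQuasigroup (fun _ _ : Fin 1 => 0) ∧ IsMedial (fun _ _ : Fin 1 => 0) := by
    refine ⟨⟨fun a => ⟨fun x y _ => Subsingleton.elim x y, fun y => ⟨0, Subsingleton.elim _ _⟩⟩,
      fun a => ⟨fun x y _ => Subsingleton.elim x y, fun y => ⟨0, Subsingleton.elim _ _⟩⟩⟩,
      fun _ _ _ _ => rfl⟩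
  haveI : Nonempty (Quot (@nRel 1)) := ⟨Quot.mk _ ⟨_, hop⟩⟩
  haveI : Subsingleton (OpsN 1) := by
    constructor
    intro o o'
    apply Subtype.ext
    funext x y
    exact Subsingleton.elim _ _
  haveI : Subsingleton (Quot (@nRel 1)) := by
    constructor
    intro q q'
    induction q using Quot.ind with | _ o =>
    induction q' using Quot.ind with | _ o' =>
    rw [Subsingleton.elim o o']
  exact Nat.card_unique

variable {A B : Type*}

/-- The `Fin a`-valued isomorphism class of the first component of affine data. -/
def affClass1 [AddCommGroup A] (a b : ℕ) (u v : ℤ) (φ ψ : A ≃+ A) (c : A)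
    (htor : ∀ x : A, ((a * b : ℕ) : ℤ) • x = 0) (hcomm : ∀ x, φ (ψ x) = ψ (φ x))
    (χ : tors a A ≃ Fin a) : Quot (@nRel a) :=
  Quot.mk _ ⟨transportOp (cOp1 φ ψ c a b u v htor) χ,
    IsQuasigroup.of_iso (iso_transportOp _ _) (isQuasigroup_cOp1 φ ψ c a b u v htor),
    IsMedial.of_iso (iso_transportOp _ _) (isMedial_cOp1 φ ψ c a b u v htor hcomm)⟩

/-- Well-definedness of `affClass1`. -/
lemma affClass1_wd [AddCommGroup A] [AddCommGroup B] (a b : ℕ) (u v : ℤ)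
    (φA ψA : A ≃+ A) (cA : A) (φB ψB : B ≃+ B) (cB : B)
    (htorA : ∀ x : A, ((a * b : ℕ) : ℤ) • x = 0)
    (htorB : ∀ x : B, ((a * b : ℕ) : ℤ) • x = 0)
    (hcommA : ∀ x, φA (ψA x) = ψA (φA x)) (hcommB : ∀ x, φB (ψB x) = ψB (φB x))
    (χA : tors a A ≃ Fin a) (χB : tors a B ≃ Fin a)
    (hiso : QuasigroupIso (affOp φA ψA cA) (affOp φB ψB cB)) :
    affClass1 a b u v φA ψA cA htorA hcommA χA =
      affClass1 a b u v φB ψB cB htorB hcommB χB := by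
  apply Quot.sound
  show QuasigroupIso (transportOp (cOp1 φA ψA cA a b u v htorA) χA)
    (transportOp (cOp1 φB ψB cB a b u v htorB) χB)
  exact QuasigroupIso.trans
    (QuasigroupIso.trans (QuasigroupIso.symm (iso_transportOp _ _))
      (cOp1_iso φA ψA cA φB ψB cB a b u v htorA htorB hiso))
    (iso_transportOp _ _)

/-- The `a`-component of the product affine structure is isomorphic to the
first factor. -/
lemma cOp1_prod_iso [AddCommGroup A] [AddCommGroup B] [Finite A] [Finite B]
    (a b : ℕ) (u v : ℤ) (huv : u * a + v * b = 1) (hco : Nat.Coprime a b)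
    (hcA : Nat.card A = a) (hcB : Nat.card B = b)
    (φ1 ψ1 : A ≃+ A) (c1 : A) (φ2 ψ2 : B ≃+ B) (c2 : B)
    (htor : ∀ x : A × B, ((a * b : ℕ) : ℤ) • x = 0) :
    QuasigroupIso (affOp φ1 ψ1 c1)
      (cOp1 (AddEquiv.prodCongr φ1 φ2) (AddEquiv.prodCongr ψ1 ψ2) (c1, c2)
        a b u v htor) := by
  have hta : ∀ x : A, (a : ℤ) • x = 0 := by
    intro x
    have := lagrange x
    rwa [hcA] at this
  have htb : ∀ x : B, (b : ℤ) • x = 0 := by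
    intro x
    have := lagrange x
    rwa [hcB] at this
  have hmem : ∀ x : A, ((x, 0) : A × B) ∈ tors a (A × B) := by
    intro x
    rw [mem_tors]
    apply Prod.ext
    · exact hta x
    · simp
  refine ⟨Equiv.mk (fun x => (⟨(x, 0), hmem x⟩ : tors a (A × B)))
    (fun s => (s : A × B).1) (fun x => rfl) ?_, fun x y => ?_⟩
  · rintro ⟨⟨z1, z2⟩, hz⟩
    have hz2 : z2 = 0 := by
      have h1 : (a : ℤ) • z2 = 0 := congrArg Prod.snd (mem_tors.mp hz)
      exact eq_zero_of_coprime_torsion a (by rw [hcB]; exact hco) h1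
    apply Subtype.ext
    simp [hz2]
  · apply Subtype.ext
    show ((affOp φ1 ψ1 c1 x y, 0) : A × B) =
      (AddEquiv.prodCongr φ1 φ2) (x, 0) + (AddEquiv.prodCongr ψ1 ψ2) (y, 0) +
        (v * b) • ((c1, c2) : A × B)
    apply Prod.ext
    · show affOp φ1 ψ1 c1 x y = φ1 x + ψ1 y + (v * b) • c1
      rw [proj1_eq_self a b u v huv (hta c1)]
      rfl
    · show (0 : B) = φ2 0 + ψ2 0 + (v * b) • c2
      rw [map_zero, map_zero, proj1_eq_zero a b v (htb c2), add_zero, add_zero]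

end Part2a

end MQAux
namespace MQAux

noncomputable section Part2b

variable {Q : Type*}

/-- The `Add` instance induced by Toyoda's construction. -/
def toyAddInst (op : Q → Q → Q) (hq : IsQuasigroup op) (e : Q) : Add Q :=
  ⟨tAdd op hq e⟩

/-- φ as an additive equivalence. -/
def phiE (op : Q → Q → Q) (hq : IsQuasigroup op) (e : Q) (hm : IsMedial op) :
    @AddEquiv Q Q (toyAddInst op hq e) (toyAddInst op hq e) :=
  @AddEquiv.mk' Q Q (toyAddInst op hq e) (toyAddInst op hq e)
    (Equiv.ofBijective _ (tPhi_bijective op hq e hm)) (tPhi_add op hq e hm)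

/-- ψ as an additive equivalence. -/
def psiE (op : Q → Q → Q) (hq : IsQuasigroup op) (e : Q) (hm : IsMedial op) :
    @AddEquiv Q Q (toyAddInst op hq e) (toyAddInst op hq e) :=
  @AddEquiv.mk' Q Q (toyAddInst op hq e) (toyAddInst op hq e)
    (Equiv.ofBijective _ (tPsi_bijective op hq e hm)) (tPsi_add op hq e hm)

/-- Toyoda's theorem: a medial quasigroup is affine over `toyGroup`. -/
lemma toyoda_opeq (op : Q → Q → Q) (hq : IsQuasigroup op) (e : Q) (hm : IsMedial op) :
    op = @affOp Q (toyGroup op hq e hm) (phiE op hq e hm) (psiE op hq e hm)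
      (tC op hq e) := by
  funext x y
  exact op_eq_affine op hq e hm x y

end Part2b

end MQAux
namespace MQAux

noncomputable section Part2c

/-- A variant of `affClass1_wd` taking the operations as separate arguments. -/
lemma affClass1_wd' {A B : Type*} [AddCommGroup A] [AddCommGroup B] (a b : ℕ) (u v : ℤ)
    (φA ψA : A ≃+ A) (cA : A) (φB ψB : B ≃+ B) (cB : B)
    (htorA : ∀ x : A, ((a * b : ℕ) : ℤ) • x = 0)
    (htorB : ∀ x : B, ((a * b : ℕ) : ℤ) • x = 0)
    (hcommA : ∀ x, φA (ψA x) = ψA (φA x)) (hcommB : ∀ x, φB (ψB x) = ψB (φB x))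
    (χA : tors a A ≃ Fin a) (χB : tors a B ≃ Fin a)
    (op : A → A → A) (op' : B → B → B)
    (hA : op = affOp φA ψA cA) (hB : op' = affOp φB ψB cB)
    (hiso : QuasigroupIso op op') :
    affClass1 a b u v φA ψA cA htorA hcommA χA =
      affClass1 a b u v φB ψB cB htorB hcommB χB := by
  rw [hA, hB] at hiso
  exact affClass1_wd a b u v φA ψA cA φB ψB cB htorA htorB hcommA hcommB χA χB hiso

section N

variable (a b : ℕ) (ha : 0 < a) (hb : 0 < b) (hco : Nat.Coprime a b)
  (u v : ℤ) (huv : u * a + v * b = 1)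

/-- The base point in `Fin (a*b)`. -/
def eN (hab : 0 < a * b) : Fin (a * b) := ⟨0, hab⟩

/-- torsion statement for `Fin (a*b)` with the Toyoda group structure. -/
lemma htorN {inst : AddCommGroup (Fin (a * b))} :
    ∀ x : Fin (a * b), ((a * b : ℕ) : ℤ) • x = 0 := by
  intro x
  have h := @lagrange (Fin (a * b)) inst (Finite.of_fintype _) x
  rwa [nat_card_fin] at h

/-- first component class of a medial quasigroup of order `a*b`. -/
def compClass1N (o : OpsN (a * b)) : Quot (@nRel a) :=
  letI inst := toyGroup o.1 o.2.1 (eN a b (Nat.mul_pos ha hb)) o.2.2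
  affClass1 a b u v (phiE o.1 o.2.1 (eN a b (Nat.mul_pos ha hb)) o.2.2)
    (psiE o.1 o.2.1 (eN a b (Nat.mul_pos ha hb)) o.2.2)
    (tC o.1 o.2.1 (eN a b (Nat.mul_pos ha hb)))
    (htorN a b)
    (commute_of_isMedial_affOp
      ((toyoda_opeq o.1 o.2.1 (eN a b (Nat.mul_pos ha hb)) o.2.2) ▸ o.2.2))
    (Finite.card_eq.mp (by
      rw [nat_card_fin]
      exact (card_tors_eq a b ha hb hco u v huv (nat_card_fin _)).1)).some

/-- second component class of a medial quasigroup of order `a*b`. -/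
def compClass2N (o : OpsN (a * b)) : Quot (@nRel b) :=
  letI inst := toyGroup o.1 o.2.1 (eN a b (Nat.mul_pos ha hb)) o.2.2
  affClass1 b a v u (phiE o.1 o.2.1 (eN a b (Nat.mul_pos ha hb)) o.2.2)
    (psiE o.1 o.2.1 (eN a b (Nat.mul_pos ha hb)) o.2.2)
    (tC o.1 o.2.1 (eN a b (Nat.mul_pos ha hb)))
    (htor_swap a b (htorN a b))
    (commute_of_isMedial_affOp
      ((toyoda_opeq o.1 o.2.1 (eN a b (Nat.mul_pos ha hb)) o.2.2) ▸ o.2.2))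
    (Finite.card_eq.mp (by
      rw [nat_card_fin]
      exact (card_tors_eq a b ha hb hco u v huv (nat_card_fin _)).2)).some

lemma compClass1N_wd (o o' : OpsN (a * b)) (h : QuasigroupIso o.1 o'.1) :
    compClass1N a b ha hb hco u v huv o = compClass1N a b ha hb hco u v huv o' := by
  unfold compClass1N
  exact @affClass1_wd' _ _ (toyGroup o.1 o.2.1 (eN a b (Nat.mul_pos ha hb)) o.2.2)
    (toyGroup o'.1 o'.2.1 (eN a b (Nat.mul_pos ha hb)) o'.2.2) a b u v
    _ _ _ _ _ _ _ _ _ _ _ _ o.1 o'.1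
    (toyoda_opeq o.1 o.2.1 _ o.2.2) (toyoda_opeq o'.1 o'.2.1 _ o'.2.2) h

lemma compClass2N_wd (o o' : OpsN (a * b)) (h : QuasigroupIso o.1 o'.1) :
    compClass2N a b ha hb hco u v huv o = compClass2N a b ha hb hco u v huv o' := by
  unfold compClass2N
  exact @affClass1_wd' _ _ (toyGroup o.1 o.2.1 (eN a b (Nat.mul_pos ha hb)) o.2.2)
    (toyGroup o'.1 o'.2.1 (eN a b (Nat.mul_pos ha hb)) o'.2.2) b a v u
    _ _ _ _ _ _ _ _ _ _ _ _ o.1 o'.1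
    (toyoda_opeq o.1 o.2.1 _ o.2.2) (toyoda_opeq o'.1 o'.2.1 _ o'.2.2) h

end N

end Part2c

end MQAux
namespace MQAux

noncomputable section Part2d

variable {A B : Type*}

lemma prodOp_affOp [AddCommGroup A] [AddCommGroup B] (φ1 ψ1 : A ≃+ A) (c1 : A)
    (φ2 ψ2 : B ≃+ B) (c2 : B) :
    prodOp (affOp φ1 ψ1 c1) (affOp φ2 ψ2 c2) =
      affOp (AddEquiv.prodCongr φ1 φ2) (AddEquiv.prodCongr ψ1 ψ2) (c1, c2) := rfl

/-- The `b`-component of the product affine structure is isomorphic to the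
second factor. -/
lemma cOp1_prod_iso_snd [AddCommGroup A] [AddCommGroup B] [Finite A] [Finite B]
    (a b : ℕ) (u v : ℤ) (huv : u * a + v * b = 1) (hco : Nat.Coprime a b)
    (hcA : Nat.card A = a) (hcB : Nat.card B = b)
    (φ1 ψ1 : A ≃+ A) (c1 : A) (φ2 ψ2 : B ≃+ B) (c2 : B)
    (htor' : ∀ x : A × B, ((b * a : ℕ) : ℤ) • x = 0) :
    QuasigroupIso (affOp φ2 ψ2 c2)
      (cOp1 (AddEquiv.prodCongr φ1 φ2) (AddEquiv.prodCongr ψ1 ψ2) (c1, c2)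
        b a v u htor') := by
  have hta : ∀ x : A, (a : ℤ) • x = 0 := by
    intro x
    have := lagrange x
    rwa [hcA] at this
  have htb : ∀ x : B, (b : ℤ) • x = 0 := by
    intro x
    have := lagrange x
    rwa [hcB] at this
  have huv' : v * b + u * a = 1 := by linarith [huv]
  have hmem : ∀ x : B, ((0, x) : A × B) ∈ tors b (A × B) := by
    intro x
    rw [mem_tors]
    apply Prod.ext
    · simp
    · exact htb x
  refine ⟨Equiv.mk (fun x => (⟨(0, x), hmem x⟩ : tors b (A × B)))
    (fun s => (s : A × B).2) (fun x => rfl) ?_, fun x y => ?_⟩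
  · rintro ⟨⟨z1, z2⟩, hz⟩
    have hz1 : z1 = 0 := by
      have h1 : (b : ℤ) • z1 = 0 := congrArg Prod.fst (mem_tors.mp hz)
      exact eq_zero_of_coprime_torsion b (by rw [hcA]; exact hco.symm) h1
    apply Subtype.ext
    simp [hz1]
  · apply Subtype.ext
    show ((0, affOp φ2 ψ2 c2 x y) : A × B) =
      (AddEquiv.prodCongr φ1 φ2) (0, x) + (AddEquiv.prodCongr ψ1 ψ2) (0, y) +
        (u * a) • ((c1, c2) : A × B)
    apply Prod.ext
    · show (0 : A) = φ1 0 + ψ1 0 + (u * a) • c1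
      rw [map_zero, map_zero, proj1_eq_zero b a u (hta c1), add_zero, add_zero]
    · show affOp φ2 ψ2 c2 x y = φ2 x + ψ2 y + (u * a) • c2
      rw [proj1_eq_self b a v u huv' (htb c2)]
      rfl

/-- Putting the components back together recovers the affine operation. -/
lemma comb_comp_master [AddCommGroup A] [Finite A] (a b : ℕ) (u v : ℤ)
    (huv : u * a + v * b = 1) (φ ψ : A ≃+ A) (c : A)
    (htor : ∀ x : A, ((a * b : ℕ) : ℤ) • x = 0)
    (χ1 : tors a A ≃ Fin a) (χ2 : tors b A ≃ Fin b) :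
    QuasigroupIso
      (transportOp (prodOp (transportOp (cOp1 φ ψ c a b u v htor) χ1)
        (transportOp (cOp1 φ ψ c b a v u (htor_swap a b htor)) χ2)) finProdFinEquiv)
      (affOp φ ψ c) :=
  QuasigroupIso.trans (QuasigroupIso.symm (iso_transportOp _ _))
    (QuasigroupIso.trans
      (quasigroupIso_prodOp (QuasigroupIso.symm (iso_transportOp _ _))
        (QuasigroupIso.symm (iso_transportOp _ _)))
      (QuasigroupIso.symm (decomp_iso φ ψ c a b u v huv htor)))

section N2

variable (a b : ℕ)

/-- combining two operations into one of order `a*b`. -/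
def combClass (o1 : OpsN a) (o2 : OpsN b) : OpsN (a * b) :=
  ⟨transportOp (prodOp o1.1 o2.1) finProdFinEquiv,
    IsQuasigroup.of_iso (iso_transportOp _ _) (isQuasigroup_prodOp o1.2.1 o2.2.1),
    IsMedial.of_iso (iso_transportOp _ _) (isMedial_prodOp o1.2.2 o2.2.2)⟩

lemma combClass_wd {o1 o1' : OpsN a} {o2 o2' : OpsN b}
    (h1 : QuasigroupIso o1.1 o1'.1) (h2 : QuasigroupIso o2.1 o2'.1) :
    QuasigroupIso (combClass a b o1 o2).1 (combClass a b o1' o2').1 :=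
  QuasigroupIso.trans (QuasigroupIso.symm (iso_transportOp _ _))
    (QuasigroupIso.trans (quasigroupIso_prodOp h1 h2) (iso_transportOp _ _))

end N2

end Part2d

end MQAux
namespace MQAux

noncomputable section Part2e

variable (a b : ℕ)

lemma hcardP (ha : 0 < a) (hb : 0 < b) : Nat.card (Fin a × Fin b) = a * b := by
  rw [Nat.card_prod, nat_card_fin, nat_card_fin]

lemma compClass1N_comb (ha : 0 < a) (hb : 0 < b) (hco : Nat.Coprime a b)
    (u v : ℤ) (huv : u * a + v * b = 1) (o1 : OpsN a) (o2 : OpsN b) :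
    compClass1N a b ha hb hco u v huv (combClass a b o1 o2) = Quot.mk _ o1 := by
  letI g1 := toyGroup o1.1 o1.2.1 ⟨0, ha⟩ o1.2.2
  letI g2 := toyGroup o2.1 o2.2.1 ⟨0, hb⟩ o2.2.2
  have htorP : ∀ x : Fin a × Fin b, ((a * b : ℕ) : ℤ) • x = 0 := by
    intro x
    have h := lagrange x
    rwa [hcardP a b ha hb] at h
  have hcomm1 : ∀ x, phiE o1.1 o1.2.1 ⟨0, ha⟩ o1.2.2 (psiE o1.1 o1.2.1 ⟨0, ha⟩ o1.2.2 x) =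
      psiE o1.1 o1.2.1 ⟨0, ha⟩ o1.2.2 (phiE o1.1 o1.2.1 ⟨0, ha⟩ o1.2.2 x) :=
    commute_of_isMedial_affOp ((toyoda_opeq o1.1 o1.2.1 ⟨0, ha⟩ o1.2.2) ▸ o1.2.2)
  have hcomm2 : ∀ x, phiE o2.1 o2.2.1 ⟨0, hb⟩ o2.2.2 (psiE o2.1 o2.2.1 ⟨0, hb⟩ o2.2.2 x) =
      psiE o2.1 o2.2.1 ⟨0, hb⟩ o2.2.2 (phiE o2.1 o2.2.1 ⟨0, hb⟩ o2.2.2 x) :=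
    commute_of_isMedial_affOp ((toyoda_opeq o2.1 o2.2.1 ⟨0, hb⟩ o2.2.2) ▸ o2.2.2)
  have hcommP : ∀ x : Fin a × Fin b,
      (AddEquiv.prodCongr (phiE o1.1 o1.2.1 ⟨0, ha⟩ o1.2.2) (phiE o2.1 o2.2.1 ⟨0, hb⟩ o2.2.2))
        ((AddEquiv.prodCongr (psiE o1.1 o1.2.1 ⟨0, ha⟩ o1.2.2)
          (psiE o2.1 o2.2.1 ⟨0, hb⟩ o2.2.2)) x) =
      (AddEquiv.prodCongr (psiE o1.1 o1.2.1 ⟨0, ha⟩ o1.2.2) (psiE o2.1 o2.2.1 ⟨0, hb⟩ o2.2.2))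
        ((AddEquiv.prodCongr (phiE o1.1 o1.2.1 ⟨0, ha⟩ o1.2.2)
          (phiE o2.1 o2.2.1 ⟨0, hb⟩ o2.2.2)) x) := by
    intro x
    exact Prod.ext (hcomm1 x.1) (hcomm2 x.2)
  have hcardtors : Nat.card (tors a (Fin a × Fin b)) = Nat.card (Fin a) := by
    rw [nat_card_fin]
    exact (card_tors_eq a b ha hb hco u v huv (hcardP a b ha hb)).1
  refine Eq.trans (@affClass1_wd' (Fin (a * b)) (Fin a × Fin b)
    (toyGroup (combClass a b o1 o2).1 (combClass a b o1 o2).2.1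
      (eN a b (Nat.mul_pos ha hb)) (combClass a b o1 o2).2.2) _ a b u v
    _ _ _ _ _ (tC o1.1 o1.2.1 ⟨0, ha⟩, tC o2.1 o2.2.1 ⟨0, hb⟩) _ htorP _ hcommP _
    ((Finite.card_eq.mp hcardtors).some)
    (combClass a b o1 o2).1 (prodOp o1.1 o2.1)
    (toyoda_opeq (combClass a b o1 o2).1 (combClass a b o1 o2).2.1
      (eN a b (Nat.mul_pos ha hb)) (combClass a b o1 o2).2.2)
    ?_ (QuasigroupIso.symm (iso_transportOp (prodOp o1.1 o2.1) finProdFinEquiv))) ?_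
  · funext x y
    refine Prod.ext ?_ ?_
    · exact congrFun (congrFun (toyoda_opeq o1.1 o1.2.1 ⟨0, ha⟩ o1.2.2) x.1) y.1
    · exact congrFun (congrFun (toyoda_opeq o2.1 o2.2.1 ⟨0, hb⟩ o2.2.2) x.2) y.2
  · apply Quot.sound
    show QuasigroupIso _ o1.1
    refine QuasigroupIso.trans (QuasigroupIso.symm (iso_transportOp _ _))
      (QuasigroupIso.trans (QuasigroupIso.symm
        (cOp1_prod_iso a b u v huv hco (nat_card_fin a) (nat_card_fin b)
          (phiE o1.1 o1.2.1 ⟨0, ha⟩ o1.2.2) (psiE o1.1 o1.2.1 ⟨0, ha⟩ o1.2.2)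
          (tC o1.1 o1.2.1 ⟨0, ha⟩)
          (phiE o2.1 o2.2.1 ⟨0, hb⟩ o2.2.2) (psiE o2.1 o2.2.1 ⟨0, hb⟩ o2.2.2)
          (tC o2.1 o2.2.1 ⟨0, hb⟩) htorP)) ?_)
    rw [← toyoda_opeq o1.1 o1.2.1 ⟨0, ha⟩ o1.2.2]
    exact quasigroupIso_refl _

lemma compClass2N_comb (ha : 0 < a) (hb : 0 < b) (hco : Nat.Coprime a b)
    (u v : ℤ) (huv : u * a + v * b = 1) (o1 : OpsN a) (o2 : OpsN b) :
    compClass2N a b ha hb hco u v huv (combClass a b o1 o2) = Quot.mk _ o2 := by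
  letI g1 := toyGroup o1.1 o1.2.1 ⟨0, ha⟩ o1.2.2
  letI g2 := toyGroup o2.1 o2.2.1 ⟨0, hb⟩ o2.2.2
  have htorP : ∀ x : Fin a × Fin b, ((a * b : ℕ) : ℤ) • x = 0 := by
    intro x
    have h := lagrange x
    rwa [hcardP a b ha hb] at h
  have hcomm1 : ∀ x, phiE o1.1 o1.2.1 ⟨0, ha⟩ o1.2.2 (psiE o1.1 o1.2.1 ⟨0, ha⟩ o1.2.2 x) =
      psiE o1.1 o1.2.1 ⟨0, ha⟩ o1.2.2 (phiE o1.1 o1.2.1 ⟨0, ha⟩ o1.2.2 x) :=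
    commute_of_isMedial_affOp ((toyoda_opeq o1.1 o1.2.1 ⟨0, ha⟩ o1.2.2) ▸ o1.2.2)
  have hcomm2 : ∀ x, phiE o2.1 o2.2.1 ⟨0, hb⟩ o2.2.2 (psiE o2.1 o2.2.1 ⟨0, hb⟩ o2.2.2 x) =
      psiE o2.1 o2.2.1 ⟨0, hb⟩ o2.2.2 (phiE o2.1 o2.2.1 ⟨0, hb⟩ o2.2.2 x) :=
    commute_of_isMedial_affOp ((toyoda_opeq o2.1 o2.2.1 ⟨0, hb⟩ o2.2.2) ▸ o2.2.2)
  have hcommP : ∀ x : Fin a × Fin b,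
      (AddEquiv.prodCongr (phiE o1.1 o1.2.1 ⟨0, ha⟩ o1.2.2) (phiE o2.1 o2.2.1 ⟨0, hb⟩ o2.2.2))
        ((AddEquiv.prodCongr (psiE o1.1 o1.2.1 ⟨0, ha⟩ o1.2.2)
          (psiE o2.1 o2.2.1 ⟨0, hb⟩ o2.2.2)) x) =
      (AddEquiv.prodCongr (psiE o1.1 o1.2.1 ⟨0, ha⟩ o1.2.2) (psiE o2.1 o2.2.1 ⟨0, hb⟩ o2.2.2))
        ((AddEquiv.prodCongr (phiE o1.1 o1.2.1 ⟨0, ha⟩ o1.2.2)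
          (phiE o2.1 o2.2.1 ⟨0, hb⟩ o2.2.2)) x) := by
    intro x
    exact Prod.ext (hcomm1 x.1) (hcomm2 x.2)
  have hcardtors : Nat.card (tors b (Fin a × Fin b)) = Nat.card (Fin b) := by
    rw [nat_card_fin]
    exact (card_tors_eq a b ha hb hco u v huv (hcardP a b ha hb)).2
  refine Eq.trans (@affClass1_wd' (Fin (a * b)) (Fin a × Fin b)
    (toyGroup (combClass a b o1 o2).1 (combClass a b o1 o2).2.1
      (eN a b (Nat.mul_pos ha hb)) (combClass a b o1 o2).2.2) _ b a v u
    _ _ _ _ _ (tC o1.1 o1.2.1 ⟨0, ha⟩, tC o2.1 o2.2.1 ⟨0, hb⟩) _ (htor_swap a b htorP) _ hcommP _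
    ((Finite.card_eq.mp hcardtors).some)
    (combClass a b o1 o2).1 (prodOp o1.1 o2.1)
    (toyoda_opeq (combClass a b o1 o2).1 (combClass a b o1 o2).2.1
      (eN a b (Nat.mul_pos ha hb)) (combClass a b o1 o2).2.2)
    ?_ (QuasigroupIso.symm (iso_transportOp (prodOp o1.1 o2.1) finProdFinEquiv))) ?_
  · funext x y
    refine Prod.ext ?_ ?_
    · exact congrFun (congrFun (toyoda_opeq o1.1 o1.2.1 ⟨0, ha⟩ o1.2.2) x.1) y.1
    · exact congrFun (congrFun (toyoda_opeq o2.1 o2.2.1 ⟨0, hb⟩ o2.2.2) x.2) y.2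
  · apply Quot.sound
    show QuasigroupIso _ o2.1
    refine QuasigroupIso.trans (QuasigroupIso.symm (iso_transportOp _ _))
      (QuasigroupIso.trans (QuasigroupIso.symm
        (cOp1_prod_iso_snd a b u v huv hco (nat_card_fin a) (nat_card_fin b)
          (phiE o1.1 o1.2.1 ⟨0, ha⟩ o1.2.2) (psiE o1.1 o1.2.1 ⟨0, ha⟩ o1.2.2)
          (tC o1.1 o1.2.1 ⟨0, ha⟩)
          (phiE o2.1 o2.2.1 ⟨0, hb⟩ o2.2.2) (psiE o2.1 o2.2.1 ⟨0, hb⟩ o2.2.2)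
          (tC o2.1 o2.2.1 ⟨0, hb⟩) (htor_swap a b htorP))) ?_)
    rw [← toyoda_opeq o2.1 o2.2.1 ⟨0, hb⟩ o2.2.2]
    exact quasigroupIso_refl _

/-- Multiplicativity of `mqN` over coprime factors. -/
theorem mqN_mul (ha : 0 < a) (hb : 0 < b) (hco : Nat.Coprime a b) :
    mqN (a * b) = mqN a * mqN b := by
  obtain ⟨u, v, huv⟩ :=
    (Nat.isCoprime_iff_coprime.mpr hco : IsCoprime (a : ℤ) (b : ℤ))
  rw [mqN_eq_card, mqN_eq_card, mqN_eq_card]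
  have key : Nat.card (Quot (@nRel (a * b))) =
      Nat.card (Quot (@nRel a) × Quot (@nRel b)) := by
    apply Nat.card_congr
    refine Equiv.mk
      (fun q => (Quot.lift (compClass1N a b ha hb hco u v huv)
          (fun o o' h => compClass1N_wd a b ha hb hco u v huv o o' h) q,
        Quot.lift (compClass2N a b ha hb hco u v huv)
          (fun o o' h => compClass2N_wd a b ha hb hco u v huv o o' h) q))
      (fun p => Quot.lift₂ (fun o1 o2 => Quot.mk (@nRel (a * b)) (combClass a b o1 o2))
        (fun o1 o2 o2' h2 => Quot.sound (combClass_wd a b (quasigroupIso_refl _) h2))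
        (fun o1 o1' o2 h1 => Quot.sound (combClass_wd a b h1 (quasigroupIso_refl _)))
        p.1 p.2)
      ?_ ?_
    · intro q
      induction q using Quot.ind with | _ o =>
      apply Quot.sound
      show QuasigroupIso _ o.1
      letI inst := toyGroup o.1 o.2.1 (eN a b (Nat.mul_pos ha hb)) o.2.2
      refine QuasigroupIso.trans (comb_comp_master a b u v huv _ _ _ _ _ _) ?_
      rw [← toyoda_opeq o.1 o.2.1 (eN a b (Nat.mul_pos ha hb)) o.2.2]
      exact quasigroupIso_refl _
    · intro p
      obtain ⟨q1, q2⟩ := p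
      induction q1 using Quot.ind with | _ o1 =>
      induction q2 using Quot.ind with | _ o2 =>
      refine Prod.ext ?_ ?_
      · exact compClass1N_comb a b ha hb hco u v huv o1 o2
      · exact compClass2N_comb a b ha hb hco u v huv o1 o2
  rw [key, Nat.card_prod]

end Part2e

end MQAux
namespace MQAux

theorem mqN_factorization (n : ℕ) (hn : 0 < n) :
    mqN n = ∏ p ∈ n.primeFactors, mqN (p ^ n.factorization p) := by
  induction n using Nat.strong_induction_on with
  | _ n ih =>
    by_cases hn1 : n = 1
    · subst hn1
      rw [Nat.primeFactors_one, Finset.prod_empty, mqN_one]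
    · have hn2 : 1 < n := lt_of_le_of_ne hn (Ne.symm hn1)
      set p := n.minFac with hp
      have hpp : p.Prime := Nat.minFac_prime hn1
      have hpdvd : p ∣ n := Nat.minFac_dvd n
      have hppos : 0 < p ^ n.factorization p := pow_pos hpp.pos _
      have hmpos : 0 < ordCompl[p] n := Nat.ordCompl_pos p hn.ne'
      have hco : Nat.Coprime (p ^ n.factorization p) (ordCompl[p] n) :=
        Nat.Coprime.pow_left _ (Nat.coprime_ordCompl hpp hn.ne')
      have hmlt : ordCompl[p] n < n := by
        apply Nat.div_lt_self hn
        have h1 : 0 < n.factorization p :=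
          Nat.Prime.factorization_pos_of_dvd hpp hn.ne' hpdvd
        exact one_lt_pow₀ hpp.one_lt h1.ne'
      have heq : p ^ n.factorization p * ordCompl[p] n = n :=
        Nat.ordProj_mul_ordCompl_eq_self n p
      have hml := ih (ordCompl[p] n) hmlt hmpos
      have hfacts : (ordCompl[p] n).primeFactors = n.primeFactors.erase p := by
        rw [← Nat.support_factorization, Nat.factorization_ordCompl,
          Finsupp.support_erase, Nat.support_factorization]
      have hfact_eq : ∀ q ∈ n.primeFactors.erase p,
          (ordCompl[p] n).factorization q = n.factorization q := by
        intro q hq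
        rw [Nat.factorization_ordCompl]
        exact Finsupp.erase_ne (Finset.ne_of_mem_erase hq)
      have hpmem : p ∈ n.primeFactors := by
        rw [Nat.mem_primeFactors]
        exact ⟨hpp, hpdvd, hn.ne'⟩
      calc mqN n = mqN (p ^ n.factorization p * ordCompl[p] n) := by rw [heq]
        _ = mqN (p ^ n.factorization p) * mqN (ordCompl[p] n) :=
            mqN_mul _ _ hppos hmpos hco
        _ = mqN (p ^ n.factorization p) *
            ∏ q ∈ n.primeFactors.erase p, mqN (q ^ n.factorization q) := by
            rw [hml, hfacts]
            congr 1
            apply Finset.prod_congr rfl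
            intro q hq
            rw [hfact_eq q hq]
        _ = ∏ q ∈ n.primeFactors, mqN (q ^ n.factorization q) :=
            Finset.mul_prod_erase _ (fun q => mqN (q ^ n.factorization q)) hpmem

end MQAux

/-- If `G` and `H` are finite abelian groups of coprime orders, then
`mq(G × H) = mq(G) · mq(H)`; consequently `n ↦ mq(n)` is multiplicative, i.e.
`mq(n) = ∏ mq(p^{k_p})` over the prime factorization of `n`. -/
theorem mq_multiplicative :
    (∀ (G H : Type) [AddCommGroup G] [AddCommGroup H] [Finite G] [Finite H],
      Nat.Coprime (Nat.card G) (Nat.card H) → mqG (G × H) = mqG G * mqG H) ∧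
    (∀ n : ℕ, 0 < n → mqN n = ∏ p ∈ n.primeFactors, mqN (p ^ n.factorization p)) := by
  constructor
  · intro G H _ _ _ _ hco
    exact MQAux.part1 G H hco
  · intro n hn
    exact MQAux.mqN_factorization n hn
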